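/- The functions φ_n^{1,0} = (−1)^n and φ_n^{2,0} = (−1)^n (n+1)_β (n+α+1)_β / (β! (1+α)_β) both satisfy L₀[φ] = 0, where L₀ is the bi-infinite Jacobi recurrence operator L₀[f]_n = A_n f_{n+1} + (A_n + C_n) f_n + C_n f_{n−1}, with A_n = (n+1)(n+α+1)/((2n+α+β+1)(2n+α+β+2)) and C_n = (n+β)(n+α+β)/((2n+α+β)(2n+α+β+1)). -/

import Mathlib

/-- The Pochhammer symbol `(a)_k = a(a+1)⋯(a+k-1)`. -/
noncomputable def poch (a : ℝ) (k : ℕ) : ℝ := ∏ i ∈ Finset.range k, (a + i)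

/-- The coefficient `A_n = (n+1)(n+α+1)/((2n+α+β+1)(2n+α+β+2))` of the bi-infinite
Jacobi recurrence operator, as a function of an integer `n`. -/
noncomputable def Acoef (α β : ℝ) (n : ℤ) : ℝ :=
  ((n : ℝ) + 1) * ((n : ℝ) + α + 1) / ((2 * (n : ℝ) + α + β + 1) * (2 * (n : ℝ) + α + β + 2))

/-- The coefficient `C_n = (n+β)(n+α+β)/((2n+α+β)(2n+α+β+1))`. -/
noncomputable def Ccoef (α β : ℝ) (n : ℤ) : ℝ :=
  ((n : ℝ) + β) * ((n : ℝ) + α + β) / ((2 * (n : ℝ) + α + β) * (2 * (n : ℝ) + α + β + 1))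

lemma poch_succ (a : ℝ) (k : ℕ) : poch a (k+1) = poch a k * (a + k) :=
  Finset.prod_range_succ _ _

lemma poch_succ' (a : ℝ) (k : ℕ) : poch a (k+1) = a * poch (a+1) k := by
  unfold poch
  rw [Finset.prod_range_succ', mul_comm]
  simp only [Nat.cast_zero, add_zero]
  congr 1
  refine Finset.prod_congr rfl fun i _ => ?_
  push_cast; ring

lemma poch_shift (a : ℝ) (k : ℕ) : poch a k * (a + k) = a * poch (a+1) k := by
  rw [← poch_succ, poch_succ']

lemma poch_pos (a : ℝ) (ha : 0 < a) (k : ℕ) : 0 < poch a k :=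
  Finset.prod_pos fun i _ => by positivity

lemma kernel_aux (a c d1 d2 K w2 w1 w0 : ℝ) (hd1 : d1 ≠ 0) (hd2 : d2 ≠ 0) (hK : K ≠ 0)
    (h : a * d2 * w2 + (a * d2 + c * d1) * w1 + c * d1 * w0 = 0) :
    a * (w2 / K) / d1 + (a / d1 + c / d2) * (w1 / K) + c * (w0 / K) / d2 = 0 := by
  field_simp
  linear_combination h

set_option maxRecDepth 8000 in
set_option maxHeartbeats 2000000 in
/-- Both `φ_n^{1,0} = (−1)^n` and
`φ_n^{2,0} = (−1)^n (n+1)_β (n+α+1)_β / (β! (1+α)_β)` lie in the kernel of the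
bi-infinite Jacobi recurrence operator
`L₀[f]_n = A_n f_{n+1} + (A_n + C_n) f_n + C_n f_{n−1}`, pointwise for all `n`
where the coefficients are defined. -/
theorem statement17 (α : ℝ) (hα : -1 < α) (β : ℕ) (hβ : 1 ≤ β) (n : ℤ)
    (h0 : 2 * (n : ℝ) + α + β ≠ 0) (h1 : 2 * (n : ℝ) + α + β + 1 ≠ 0)
    (h2 : 2 * (n : ℝ) + α + β + 2 ≠ 0)
    (φ1 φ2 : ℤ → ℝ)
    (hφ1 : ∀ m : ℤ, φ1 m = (-1 : ℝ) ^ m)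
    (hφ2 : ∀ m : ℤ, φ2 m = (-1 : ℝ) ^ m * poch ((m : ℝ) + 1) β * poch ((m : ℝ) + α + 1) β
        / (β.factorial * poch (1 + α) β)) :
    (Acoef α β n * φ1 (n + 1) + (Acoef α β n + Ccoef α β n) * φ1 n
        + Ccoef α β n * φ1 (n - 1) = 0)
      ∧ (Acoef α β n * φ2 (n + 1) + (Acoef α β n + Ccoef α β n) * φ2 n
        + Ccoef α β n * φ2 (n - 1) = 0) := by
  have hneg : (-1 : ℝ) ≠ 0 := by norm_num
  have hpa : (-1 : ℝ) ^ (n + 1) = -(-1 : ℝ) ^ n := by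
    rw [zpow_add₀ hneg, zpow_one]; ring
  have hpb : (-1 : ℝ) ^ (n - 1) = -(-1 : ℝ) ^ n := by
    rw [zpow_sub₀ hneg, zpow_one]; field_simp
  set x : ℝ := (n : ℝ) with hx
  constructor
  · rw [hφ1, hφ1, hφ1, hpa, hpb]; ring
  · rw [hφ2, hφ2, hφ2, hpa, hpb]
    push_cast
    have hK : (β.factorial : ℝ) * poch (1 + α) β ≠ 0 := by
      have := poch_pos (1 + α) (by linarith) β
      have := Nat.factorial_pos β
      positivity
    have e1 : poch (x+1) β * (x+1+β) = (x+1) * poch (x+2) β := by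
      have := poch_shift (x+1) β
      rw [show (x+1+1 : ℝ) = x+2 by ring] at this
      exact this
    have e2 : poch (x+α+1) β * (x+α+1+β) = (x+α+1) * poch (x+α+2) β := by
      have := poch_shift (x+α+1) β
      rw [show (x+α+1+1 : ℝ) = x+α+2 by ring] at this
      exact this
    have e3 : poch x β * (x+β) = x * poch (x+1) β := poch_shift x β
    have e4 : poch (x+α) β * (x+α+β) = (x+α) * poch (x+α+1) β := poch_shift (x+α) β
    have E1 : (x+1)*(x+α+1)*(poch (x+2) β * poch (x+α+2) β)
        = (x+1+β)*(x+α+1+β)*(poch (x+1) β * poch (x+α+1) β) := by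
      linear_combination (-((x+α+1)*poch (x+α+2) β)) * e1 + (-(poch (x+1) β * (x+1+β))) * e2
    have E2 : (x+β)*(x+α+β)*(poch x β * poch (x+α) β)
        = x*(x+α)*(poch (x+1) β * poch (x+α+1) β) := by
      linear_combination (poch (x+α) β * (x+α+β)) * e3 + (x * poch (x+1) β) * e4
    rw [Acoef, Ccoef]
    rw [show ((n:ℝ)+1+1) = x+2 by rw [hx]; ring, show ((n:ℝ)+1+α+1) = x+α+2 by rw [hx]; ring,
        show ((n:ℝ)-1+1) = x by rw [hx]; ring, show ((n:ℝ)-1+α+1) = x+α by rw [hx]; ring]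
    set u : ℝ := (-1:ℝ) ^ n with hu
    set q2 : ℝ := poch (x+2) β
    set q2a : ℝ := poch (x+α+2) β
    set p1 : ℝ := poch (x+1) β
    set p2 : ℝ := poch (x+α+1) β
    set q0 : ℝ := poch x β
    set q0a : ℝ := poch (x+α) β
    have hd1 : (2*x+α+β+1) * (2*x+α+β+2) ≠ 0 := mul_ne_zero h1 h2
    have hd2 : (2*x+α+β) * (2*x+α+β+1) ≠ 0 := mul_ne_zero h0 h1
    have main : (x+1)*(x+α+1) * ((2*x+α+β) * (2*x+α+β+1)) * (-u*q2*q2a)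
        + ((x+1)*(x+α+1) * ((2*x+α+β) * (2*x+α+β+1))
            + (x+β)*(x+α+β) * ((2*x+α+β+1) * (2*x+α+β+2))) * (u*p1*p2)
        + (x+β)*(x+α+β) * ((2*x+α+β+1) * (2*x+α+β+2)) * (-u*q0*q0a) = 0 := by
      linear_combination (-(u*(2*x+α+β)*(2*x+α+β+1))) * E1
        + (-(u*(2*x+α+β+1)*(2*x+α+β+2))) * E2
    have fin := kernel_aux ((x+1)*(x+α+1)) ((x+β)*(x+α+β))
      ((2*x+α+β+1) * (2*x+α+β+2)) ((2*x+α+β) * (2*x+α+β+1))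
      ((β.factorial : ℝ) * poch (1 + α) β) (-u*q2*q2a) (u*p1*p2) (-u*q0*q0a)
      hd1 hd2 hK main
    rw [hx] at fin
    linear_combination fin
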